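/- arXiv:2507.21674 — 2 statements merged into one kernel-verified Lean document; each statement's English description precedes it below -/
import Mathlib

section
/- Let I be a two-sided ideal of ℍ[q₁,…,qₙ]. Then V_c(I) has spherical symmetry, i.e. V_c(I) = 𝕊_{V_c(I)}. -/
/-
Conjugation `x ↦ g⁻¹ x g` by a nonzero quaternion is an automorphism of `ℍ` fixing `ℝ`, so it maps
each slice `ℂ_K` onto `ℂ_{g⁻¹Kg}` and satisfies `P(g⁻¹ a g) = g⁻¹ · (g P g⁻¹)(a) · g`, where
`g P g⁻¹` conjugates every coefficient of `P`. When `I` is two-sided, `g P g⁻¹ ∈ I` for every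
`P ∈ I`, so `V_c(I)` is closed under conjugation, which is exactly spherical symmetry.
-/

open scoped Quaternion

noncomputable section

/-- The quaternions. -/
abbrev ℍq : Type := Quaternion ℝ

/-- Slice regular polynomials in `n` quaternionic variables: formal polynomials with
quaternionic coefficients written on the right, with the slice (convolution) product. -/
abbrev SP (n : ℕ) : Type := AddMonoidAlgebra ℍq (Fin n →₀ ℕ)

/-- Right ideals of `SP n`. -/
abbrev RIdeal (n : ℕ) := Submodule (SP n)ᵐᵒᵖ (SP n)

/-- Evaluation of a slice regular polynomial at a point of `ℍⁿ`:
`P(p) = ∑ p₁^{ℓ₁} ⋯ pₙ^{ℓₙ} a_{ℓ₁,…,ℓₙ}`. -/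
def peval {n : ℕ} (p : Fin n → ℍq) (P : SP n) : ℍq :=
  Finsupp.sum P.coeff fun m a => (List.ofFn fun i => p i ^ m i).prod * a

/-- The regular conjugate `P^c`. -/
def rconj {n : ℕ} (P : SP n) : SP n :=
  AddMonoidAlgebra.ofCoeff (Finsupp.mapRange (star : ℍq → ℍq) (star_zero _) P.coeff)

/-- The symmetrization `P^s = P * P^c`. -/
def symzn {n : ℕ} (P : SP n) : SP n := P * rconj P

/-- The sphere `𝕊` of quaternionic imaginary units. -/
def QSph : Set ℍq := {J | J ^ 2 = -1}

/-- The slice `ℂ_K = ℝ + ℝK`. -/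
def CSlice (K : ℍq) : Set ℍq := {q | ∃ x y : ℝ, q = (x : ℍq) + (y : ℍq) * K}

/-- The points of `ℍⁿ` lying in some slice `ℂ_Kⁿ` (points with commuting components). -/
def commSlice (n : ℕ) : Set (Fin n → ℍq) := {p | ∃ K ∈ QSph, ∀ i, p i ∈ CSlice K}

/-- The common zero set `V(I)` of a right ideal. -/
def Vq {n : ℕ} (I : RIdeal n) : Set (Fin n → ℍq) := {p | ∀ P ∈ I, peval p P = 0}

/-- `V_c(I) = V(I) ∩ ⋃_{K ∈ 𝕊} ℂ_Kⁿ`. -/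
def Vc {n : ℕ} (I : RIdeal n) : Set (Fin n → ℍq) := Vq I ∩ commSlice n

/-- The spherical set `𝕊_a` of a point `a ∈ ℍⁿ`. -/
def SphSet {n : ℕ} (a : Fin n → ℍq) : Set (Fin n → ℍq) :=
  {p | ∃ g : ℍq, g ≠ 0 ∧ ∀ i, p i = g⁻¹ * a i * g}

/-- The symmetrization `𝕊_Z = ⋃_{a ∈ Z} 𝕊_a` of a subset of `ℍⁿ`. -/
def SymmSet {n : ℕ} (Z : Set (Fin n → ℍq)) : Set (Fin n → ℍq) := ⋃ a ∈ Z, SphSet a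

/-- `J(Z)`: the right ideal generated by the polynomials vanishing identically on `Z`. -/
def Jq {n : ℕ} (Z : Set (Fin n → ℍq)) : RIdeal n :=
  Submodule.span (SP n)ᵐᵒᵖ {P | ∀ p ∈ Z, peval p P = 0}

/-- A right ideal is completely prime if `P*Q ∈ I` and `P*I ⊆ I` imply `P ∈ I` or `Q ∈ I`. -/
def CompletelyPrime {n : ℕ} (I : RIdeal n) : Prop :=
  ∀ P Q : SP n, P * Q ∈ I → (∀ R ∈ I, P * R ∈ I) → P ∈ I ∨ Q ∈ I

/-- The radical `√I`: the intersection of all completely prime right ideals containing `I`. -/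
def radq {n : ℕ} (I : RIdeal n) : RIdeal n :=
  sInf {J : RIdeal n | CompletelyPrime J ∧ I ≤ J}

/-- A right ideal is quasi prime if `P*Q ∈ I` implies `P ∈ I` or `Q^s ∈ I`. -/
def QuasiPrime {n : ℕ} (I : RIdeal n) : Prop :=
  ∀ P Q : SP n, P * Q ∈ I → P ∈ I ∨ symzn Q ∈ I

/-- A right ideal is two-sided if it is also closed under left multiplication. -/
def IsTwoSidedIdl {n : ℕ} (I : RIdeal n) : Prop :=
  ∀ P : SP n, ∀ Q ∈ I, P * Q ∈ I

/-- The symmetrized ideal `S(I)`: the right ideal generated by `{P^s : P ∈ I}`. -/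
def SIdl {n : ℕ} (I : RIdeal n) : RIdeal n :=
  Submodule.span (SP n)ᵐᵒᵖ {Q | ∃ P ∈ I, Q = symzn P}

/-- The product `I₁ * I₂`: the right ideal generated by `{P*Q : P ∈ I₁, Q ∈ I₂}`. -/
def prodIdl {n : ℕ} (I₁ I₂ : RIdeal n) : RIdeal n :=
  Submodule.span (SP n)ᵐᵒᵖ {x | ∃ P ∈ I₁, ∃ Q ∈ I₂, x = P * Q}

/-- Reducibility of the slice algebraic set `V_c(I)`. -/
def VcReducible {n : ℕ} (I : RIdeal n) : Prop :=
  ∃ I₁ I₂ : RIdeal n, I₁ ≠ ⊥ ∧ I₁ ≠ ⊤ ∧ I₂ ≠ ⊥ ∧ I₂ ≠ ⊤ ∧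
    ¬ I₁ ≤ I₂ ∧ ¬ I₂ ≤ I₁ ∧ Vc I = Vc I₁ ∪ Vc I₂

/-- Reducibility of the slice algebraic set `V(I)`. -/
def VReducible {n : ℕ} (I : RIdeal n) : Prop :=
  ∃ I₁ I₂ : RIdeal n, I₁ ≠ ⊥ ∧ I₁ ≠ ⊤ ∧ I₂ ≠ ⊥ ∧ I₂ ≠ ⊤ ∧
    ¬ I₁ ≤ I₂ ∧ ¬ I₂ ≤ I₁ ∧ Vq I = Vq I₁ ∪ Vq I₂

/-- An irreducible slice regular polynomial. -/
def IrredPoly {n : ℕ} (H : SP n) : Prop :=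
  H ≠ 0 ∧ ¬ IsUnit H ∧ ∀ P Q : SP n, H = P * Q → IsUnit P ∨ IsUnit Q

/-- The variable `q_i` as a slice regular polynomial. -/
def Xq {n : ℕ} (i : Fin n) : SP n := AddMonoidAlgebra.single (Finsupp.single i 1) 1

/-- A constant polynomial. -/
def Cq {n : ℕ} (a : ℍq) : SP n := AddMonoidAlgebra.single 0 a

/-- A polynomial has real coefficients. -/
def RealCoeffs {n : ℕ} (P : SP n) : Prop := ∀ m : Fin n →₀ ℕ, ∃ r : ℝ, P.coeff m = (r : ℍq)

lemma conj_list_prod₀ {α : Type*} [GroupWithZero α] {g : α} (hg : g ≠ 0) (l : List α) :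
    (l.map fun x => g⁻¹ * x * g).prod = g⁻¹ * l.prod * g := by
  induction l with
  | nil => simp [inv_mul_cancel₀ hg]
  | cons a t ih =>
    rw [List.map_cons, List.prod_cons, ih, List.prod_cons]
    simp only [mul_assoc, mul_inv_cancel_left₀ hg]

lemma coeff_Cq_mul_mul_Cq {n : ℕ} (g h : ℍq) (P : SP n) (m : Fin n →₀ ℕ) :
    (Cq g * P * Cq h).coeff m = g * P.coeff m * h := by
  simp [Cq, AddMonoidAlgebra.coeff_single_zero_mul, AddMonoidAlgebra.coeff_mul_single_zero]

lemma peval_conj {n : ℕ} (a : Fin n → ℍq) {g : ℍq} (hg : g ≠ 0) (P : SP n) :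
    peval (fun i => g⁻¹ * a i * g) P = g⁻¹ * peval a (Cq g * P * Cq g⁻¹) * g := by
  have hQ : Cq g * P * Cq g⁻¹ = AddMonoidAlgebra.ofCoeff
      (Finsupp.mapRange (fun b => g * b * g⁻¹) (by simp) P.coeff) :=
    AddMonoidAlgebra.ext (Finsupp.ext (coeff_Cq_mul_mul_Cq g g⁻¹ P))
  have hmono (m : Fin n →₀ ℕ) : (List.ofFn fun i => (g⁻¹ * a i * g) ^ m i).prod
      = g⁻¹ * (List.ofFn fun i => a i ^ m i).prod * g := by
    simp only [GroupWithZero.conj_pow₀ hg, ← conj_list_prod₀ hg, List.map_ofFn, Function.comp_def]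
  rw [hQ, peval, peval, AddMonoidAlgebra.coeff_ofCoeff,
    Finsupp.sum_mapRange_index (fun _ => by simp), Finsupp.mul_sum, Finsupp.sum_mul]
  refine Finsupp.sum_congr fun m _ => ?_
  rw [hmono]
  simp only [mul_assoc, inv_mul_cancel₀ hg, mul_one]

lemma IsTwoSidedIdl.mul_mul_mem {n : ℕ} {I : RIdeal n} (hI : IsTwoSidedIdl I) (A B : SP n)
    {P : SP n} (hP : P ∈ I) : A * P * B ∈ I :=
  I.smul_mem (MulOpposite.op B) (hI A P hP)

lemma IsTwoSidedIdl.conj_mem_Vq {n : ℕ} {I : RIdeal n} (hI : IsTwoSidedIdl I)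
    {a : Fin n → ℍq} (ha : a ∈ Vq I) {g : ℍq} (hg : g ≠ 0) :
    (fun i => g⁻¹ * a i * g) ∈ Vq I := fun P hP => by
  rw [peval_conj a hg, ha _ (hI.mul_mul_mem _ _ hP), mul_zero, zero_mul]

lemma conj_mem_QSph {K : ℍq} (hK : K ∈ QSph) {g : ℍq} (hg : g ≠ 0) : g⁻¹ * K * g ∈ QSph := by
  rw [QSph, Set.mem_ofPred_eq, GroupWithZero.conj_pow₀ hg, hK, mul_neg_one, neg_mul,
    inv_mul_cancel₀ hg]

lemma conj_mem_CSlice {K q : ℍq} (hq : q ∈ CSlice K) {g : ℍq} (hg : g ≠ 0) :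
    g⁻¹ * q * g ∈ CSlice (g⁻¹ * K * g) := by
  obtain ⟨x, y, rfl⟩ := hq
  refine ⟨x, y, ?_⟩
  rw [mul_add, add_mul, ← Quaternion.coe_commutes x, ← mul_assoc g⁻¹, ← Quaternion.coe_commutes y]
  simp [mul_assoc, inv_mul_cancel₀ hg]

lemma conj_mem_commSlice {n : ℕ} {a : Fin n → ℍq} (ha : a ∈ commSlice n) {g : ℍq} (hg : g ≠ 0) :
    (fun i => g⁻¹ * a i * g) ∈ commSlice n := by
  obtain ⟨K, hK, haK⟩ := ha
  exact ⟨g⁻¹ * K * g, conj_mem_QSph hK hg, fun i => conj_mem_CSlice (haK i) hg⟩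

lemma subset_SymmSet {n : ℕ} (Z : Set (Fin n → ℍq)) : Z ⊆ SymmSet Z :=
  fun a ha => Set.mem_biUnion ha ⟨1, one_ne_zero, fun i => by simp⟩

lemma SymmSet_subset {n : ℕ} {Z : Set (Fin n → ℍq)}
    (hZ : ∀ a ∈ Z, ∀ g : ℍq, g ≠ 0 → (fun i => g⁻¹ * a i * g) ∈ Z) : SymmSet Z ⊆ Z := by
  intro p hp
  obtain ⟨a, ha, g, hg, hpg⟩ := Set.mem_iUnion₂.mp hp
  exact funext hpg ▸ hZ a ha g hg

/-- If `I` is a two-sided ideal then `V_c(I)` has spherical symmetry. -/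
theorem stmt3 {n : ℕ} (I : RIdeal n) (hI : IsTwoSidedIdl I) :
    Vc I = SymmSet (Vc I) :=
  (subset_SymmSet _).antisymm <| SymmSet_subset fun _ ha _ hg =>
    ⟨hI.conj_mem_Vq ha.1 hg, conj_mem_commSlice ha.2 hg⟩

end
end

section
/- If I is a completely prime right ideal of ℍ[q₁,…,qₙ], then I is a quasi prime right ideal. -/
open scoped Quaternion

noncomputable section

/-!
A self-conjugate slice regular polynomial has real coefficients, so it is central. The
symmetrization `Q^s = Q * Q^c` is self-conjugate, because regular conjugation reverses
products. Hence from `P * Q ∈ I` we get `Q^s * P = P * Q * Q^c ∈ I` and `Q^s * I = I * Q^s ⊆ I`,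
and complete primality gives `Q^s ∈ I` or `P ∈ I`.
-/

theorem AddMonoidAlgebra.commute_of_forall_coeff_commute {R M : Type*} [Semiring R]
    [AddCommMonoid M] {f : AddMonoidAlgebra R M} (hf : ∀ m r, Commute (f.coeff m) r)
    (x : AddMonoidAlgebra R M) : Commute f x := by
  rw [← AddMonoidAlgebra.sum_coeff_single f]
  exact Commute.sum_left _ _ _ fun m _ =>
    AddMonoidAlgebra.single_commute (fun m' => AddCommute.all m m') (hf m) x

section RegularConjugate

variable {n : ℕ}

theorem rconj_coeff (P : SP n) (m : Fin n →₀ ℕ) : (rconj P).coeff m = star (P.coeff m) := by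
  simp [rconj]

theorem rconj_single (m : Fin n →₀ ℕ) (a : ℍq) :
    rconj (AddMonoidAlgebra.single m a) = AddMonoidAlgebra.single m (star a) :=
  AddMonoidAlgebra.ext (Finsupp.mapRange_single (hf := star_zero _))

theorem rconj_add (P Q : SP n) : rconj (P + Q) = rconj P + rconj Q :=
  AddMonoidAlgebra.ext <|
    Finsupp.mapRange_add (hf := star_zero _) (fun _ _ => star_add _ _) P.coeff Q.coeff

theorem rconj_zero : rconj (0 : SP n) = 0 :=
  AddMonoidAlgebra.ext <| Finsupp.ext fun m => by simp [rconj_coeff]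

theorem rconj_rconj (P : SP n) : rconj (rconj P) = P :=
  AddMonoidAlgebra.ext <| Finsupp.ext fun m => by rw [rconj_coeff, rconj_coeff, star_star]

theorem rconj_mul (P Q : SP n) : rconj (P * Q) = rconj Q * rconj P := by
  induction P using AddMonoidAlgebra.induction_linear with
  | zero => simp [rconj_zero]
  | add P₁ P₂ ih₁ ih₂ => rw [add_mul, rconj_add, rconj_add, mul_add, ih₁, ih₂]
  | single m a =>
    induction Q using AddMonoidAlgebra.induction_linear with
    | zero => simp [rconj_zero]
    | add Q₁ Q₂ ih₁ ih₂ => rw [mul_add, rconj_add, rconj_add, add_mul, ih₁, ih₂]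
    | single m' a' =>
      simp only [AddMonoidAlgebra.single_mul_single, rconj_single, star_mul, add_comm m]

theorem commute_of_rconj_eq_self {S : SP n} (hS : rconj S = S) (R : SP n) : Commute S R := by
  refine AddMonoidAlgebra.commute_of_forall_coeff_commute (fun m r => ?_) R
  have hreal : star (S.coeff m) = S.coeff m := by rw [← rconj_coeff, hS]
  rw [Quaternion.star_eq_self.mp hreal]
  exact Quaternion.coe_commute _ r

theorem rconj_symzn (Q : SP n) : rconj (symzn Q) = symzn Q := by
  rw [symzn, rconj_mul, rconj_rconj]

theorem symzn_commute (Q R : SP n) : Commute (symzn Q) R :=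
  commute_of_rconj_eq_self (rconj_symzn Q) R

end RegularConjugate

theorem RIdeal.mul_mem_right {n : ℕ} (I : RIdeal n) {P : SP n} (hP : P ∈ I) (R : SP n) :
    P * R ∈ I :=
  I.smul_mem (MulOpposite.op R) hP

theorem CompletelyPrime.mem_or_mem_of_mul_mem_of_central {n : ℕ} {I : RIdeal n}
    (hI : CompletelyPrime I) {P S : SP n} (hS : ∀ R, Commute S R) (hPS : P * S ∈ I) :
    P ∈ I ∨ S ∈ I := by
  have hSP : S * P ∈ I := (hS P).eq ▸ hPS
  have hSI : ∀ R ∈ I, S * R ∈ I := fun R hR => (hS R).eq ▸ I.mul_mem_right hR S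
  exact (hI S P hSP hSI).symm

/-- Every completely prime right ideal is quasi prime. -/
theorem stmt9 {n : ℕ} (I : RIdeal n) (h : CompletelyPrime I) : QuasiPrime I := by
  intro P Q hPQ
  have hPQs : P * symzn Q ∈ I := by
    rw [symzn, ← mul_assoc]
    exact I.mul_mem_right hPQ (rconj Q)
  exact h.mem_or_mem_of_mul_mem_of_central (symzn_commute Q) hPQs

end
end
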